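/- Work in ℝ^n with the standard inner product ⟨·,·⟩ and standard basis e_1,…,e_n, and let V = {e_i : 1 ≤ i ≤ n} ∪ {−e_i : 1 ≤ i ≤ n}. Let Φ_C = {ε·e_i + δ·e_j : 1 ≤ i < j ≤ n, ε, δ ∈ {1,−1}} ∪ {2e_i : 1 ≤ i ≤ n} ∪ {−2e_i : 1 ≤ i ≤ n} be the set of C_n roots, and for nonzero α let r_α(x) = x − (2⟨x,α⟩/⟨α,α⟩)·α. Then EVERY subset M ⊆ V satisfies the strong exchange property with respect to Φ_C: for all u, v ∈ M with u ≠ v there exists α ∈ Φ_C with ⟨u,α⟩·⟨v,α⟩ < 0, r_α(u) ∈ M and r_α(v) ∈ M. -/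

import Mathlib

/-- The `i`-th standard basis vector of `ℝ^n`. -/
noncomputable def stdVec (n : ℕ) (i : Fin n) : EuclideanSpace ℝ (Fin n) :=
  EuclideanSpace.single i 1

/-- The vertex set of the `n`-dimensional cross polytope. -/
def crossVerts (n : ℕ) : Set (EuclideanSpace ℝ (Fin n)) :=
  {v | ∃ i : Fin n, v = stdVec n i ∨ v = -stdVec n i}

/-- The root system of type `C_n`. -/
def PhiC (n : ℕ) : Set (EuclideanSpace ℝ (Fin n)) :=
  {α | ∃ i j : Fin n, i ≠ j ∧ ∃ ε δ : ℝ, (ε = 1 ∨ ε = -1) ∧ (δ = 1 ∨ δ = -1) ∧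
    α = ε • stdVec n i + δ • stdVec n j} ∪
  {α | ∃ i : Fin n, α = (2 : ℝ) • stdVec n i ∨ α = -((2 : ℝ) • stdVec n i)}

/-- The reflection in the hyperplane orthogonal to `α`. -/
noncomputable def reflVec {n : ℕ} (α x : EuclideanSpace ℝ (Fin n)) :
    EuclideanSpace ℝ (Fin n) :=
  x - (2 * (inner ℝ x α : ℝ) / (inner ℝ α α : ℝ)) • α

lemma inner_std_self {n : ℕ} (i : Fin n) :
    (inner ℝ (stdVec n i) (stdVec n i) : ℝ) = 1 := by
  simp [stdVec, EuclideanSpace.inner_single_left, EuclideanSpace.single_apply]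

lemma inner_std_ne {n : ℕ} {i j : Fin n} (h : i ≠ j) :
    (inner ℝ (stdVec n i) (stdVec n j) : ℝ) = 0 := by
  simp [stdVec, EuclideanSpace.inner_single_left, EuclideanSpace.single_apply]
  exact fun h' => absurd h' h

/-- Every subset of the cross polytope vertices satisfies the strong
exchange property with respect to the `C_n` roots. -/
theorem crossPolytope_Cn_always_strong
    {n : ℕ} (M : Set (EuclideanSpace ℝ (Fin n))) (hM : M ⊆ crossVerts n) :
    ∀ u ∈ M, ∀ v ∈ M, u ≠ v → ∃ α ∈ PhiC n,
      (inner ℝ u α : ℝ) * (inner ℝ v α : ℝ) < 0 ∧ reflVec α u ∈ M ∧ reflVec α v ∈ M := by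
  intro u hu v hv huv
  obtain ⟨i, hi⟩ := hM hu
  obtain ⟨j, hj⟩ := hM hv
  obtain ⟨s, hs, hu'⟩ : ∃ s : ℝ, (s = 1 ∨ s = -1) ∧ u = s • stdVec n i := by
    rcases hi with h | h
    · exact ⟨1, Or.inl rfl, by simp [h]⟩
    · exact ⟨-1, Or.inr rfl, by simp [h]⟩
  obtain ⟨t, ht, hv'⟩ : ∃ t : ℝ, (t = 1 ∨ t = -1) ∧ v = t • stdVec n j := by
    rcases hj with h | h
    · exact ⟨1, Or.inl rfl, by simp [h]⟩
    · exact ⟨-1, Or.inr rfl, by simp [h]⟩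
  have hss : s * s = 1 := by rcases hs with h | h <;> simp [h]
  have htt : t * t = 1 := by rcases ht with h | h <;> simp [h]
  by_cases hij : i = j
  · subst hij
    have hst : t = -s := by
      rcases hs with h | h <;> rcases ht with h' | h' <;> subst h <;> subst h' <;>
        first
        | exact absurd (hu'.trans hv'.symm) huv
        | norm_num
    have h1 : (inner ℝ u ((2*s) • stdVec n i) : ℝ) = 2 := by
      rw [hu', real_inner_smul_left, real_inner_smul_right, inner_std_self]
      nlinarith [hss]
    have h2 : (inner ℝ v ((2*s) • stdVec n i) : ℝ) = -2 := by
      rw [hv', real_inner_smul_left, real_inner_smul_right, inner_std_self, hst]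
      nlinarith [hss]
    have h3 : (inner ℝ ((2*s) • stdVec n i) ((2*s) • stdVec n i) : ℝ) = 4 := by
      rw [real_inner_smul_left, real_inner_smul_right, inner_std_self]
      nlinarith [hss]
    refine ⟨(2*s) • stdVec n i, Or.inr ⟨i, ?_⟩, ?_, ?_, ?_⟩
    · rcases hs with h | h <;> subst h
      · left; norm_num
      · right; rw [← neg_smul]; norm_num
    · rw [h1, h2]; norm_num
    · have : reflVec ((2*s) • stdVec n i) u = v := by
        rw [reflVec, h1, h3, hu', hv', hst]
        module
      rw [this]; exact hv
    · have : reflVec ((2*s) • stdVec n i) v = u := by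
        rw [reflVec, h2, h3, hu', hv', hst]
        module
      rw [this]; exact hu
  · set α : EuclideanSpace ℝ (Fin n) := s • stdVec n i + (-t) • stdVec n j with hα
    have hji : j ≠ i := fun h => hij h.symm
    have h1 : (inner ℝ u α : ℝ) = 1 := by
      rw [hu', hα]
      simp only [inner_add_right, real_inner_smul_left, real_inner_smul_right,
        inner_std_self, inner_std_ne hij]
      nlinarith [hss]
    have h2 : (inner ℝ v α : ℝ) = -1 := by
      rw [hv', hα]
      simp only [inner_add_right, real_inner_smul_left, real_inner_smul_right,
        inner_std_self, inner_std_ne hji]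
      nlinarith [htt]
    have h3 : (inner ℝ α α : ℝ) = 2 := by
      rw [hα]
      simp only [inner_add_left, inner_add_right, real_inner_smul_left,
        real_inner_smul_right, inner_std_self, inner_std_ne hij, inner_std_ne hji]
      nlinarith [hss, htt]
    refine ⟨α, Or.inl ⟨i, j, hij, s, -t, hs, ?_, rfl⟩, ?_, ?_, ?_⟩
    · rcases ht with h | h <;> subst h <;> norm_num
    · rw [h1, h2]; norm_num
    · have : reflVec α u = v := by
        rw [reflVec, h1, h3, hu', hv', hα]
        module
      rw [this]; exact hv
    · have : reflVec α v = u := by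
        rw [reflVec, h2, h3, hu', hv', hα]
        module
      rw [this]; exact hu
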